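/- Let B be a ball-basis in a measure space (X, M, μ) and 1 ≤ r < ∞. For any ball B ∈ B and f ∈ L^r(X), ⟨f⟩*_B ≤ essinf_{y∈B} M f(y) ≤ C ⟨f⟩*_B, where ⟨f⟩*_B = sup_{A ∈ B, A ⊇ B} (μ(A)⁻¹ ∫_A |f|^r)^{1/r}, M f(x) = sup_{B ∋ x} (μ(B)⁻¹ ∫_B |f|^r)^{1/r}, and C depends only on the hull constant K. -/

import Mathlib

open MeasureTheory ENNReal Set Filter

noncomputable section

/-- A ball-basis on a measure space, with hull constant `K` (conditions B1–B4). -/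
structure BallBasis (X : Type*) [MeasurableSpace X] (μ : Measure X) where
  balls : Set (Set X)
  K : ℝ≥0∞
  K_pos : 0 < K
  K_lt_top : K < ∞
  meas : ∀ B ∈ balls, MeasurableSet B
  pos : ∀ B ∈ balls, 0 < μ B
  lt_top : ∀ B ∈ balls, μ B < ∞
  pair : ∀ x y : X, ∃ B ∈ balls, x ∈ B ∧ y ∈ B
  approx : ∀ E : Set X, MeasurableSet E → ∀ ε : ℝ≥0∞, 0 < ε →
    ∃ Bs : ℕ → Set X, (∀ k, Bs k ∈ balls) ∧ μ (symmDiff E (⋃ k, Bs k)) < ε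
  hull : Set X → Set X
  hull_mem : ∀ B ∈ balls, hull B ∈ balls
  hull_sub : ∀ B ∈ balls, ∀ A ∈ balls, μ A ≤ 2 * μ B → (A ∩ B).Nonempty → A ⊆ hull B
  hull_bound : ∀ B ∈ balls, μ (hull B) ≤ K * μ B

/-- The doubling property of a ball-basis, with doubling constant `η > 2`. -/
def BallBasis.Doubling {X : Type*} [MeasurableSpace X] {μ : Measure X}
    (𝓑 : BallBasis X μ) (η : ℝ≥0∞) : Prop :=
  2 < η ∧ ∀ A ∈ 𝓑.balls, μ A < μ (univ : Set X) / 2 →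
    ∃ B ∈ 𝓑.balls, A ⊆ B ∧ 2 * μ A ≤ μ B ∧ μ B ≤ η * μ A

variable {X : Type*} [MeasurableSpace X]

/-- Oscillation `OSC_E(f) = sup_{x,x' ∈ E} |f x − f x'|` of a real function, valued in `ℝ≥0∞`. -/
def osc (f : X → ℝ) (E : Set X) : ℝ≥0∞ :=
  ⨆ x ∈ E, ⨆ y ∈ E, ENNReal.ofReal (f x - f y)

/-- Oscillation of an `ℝ≥0∞`-valued function. -/
def eosc (F : X → ℝ≥0∞) (E : Set X) : ℝ≥0∞ :=
  ⨆ x ∈ E, ⨆ y ∈ E, (F x - F y)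

/-- `OSC_{B,α}(f)`: the infimum of `OSC_E(f)` over measurable `E ⊆ B` with `μ(E) ≥ α μ(B)`. -/
def OSCa (μ : Measure X) (f : X → ℝ) (B : Set X) (α : ℝ) : ℝ≥0∞ :=
  ⨅ (E : Set X) (_ : MeasurableSet E) (_ : E ⊆ B)
    (_ : ENNReal.ofReal α * μ B ≤ μ E), osc f E

/-- `OSC_{B,α}` for `ℝ≥0∞`-valued functions. -/
def eOSCa (μ : Measure X) (F : X → ℝ≥0∞) (B : Set X) (α : ℝ) : ℝ≥0∞ :=
  ⨅ (E : Set X) (_ : MeasurableSet E) (_ : E ⊆ B)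
    (_ : ENNReal.ofReal α * μ B ≤ μ E), eosc F E

/-- `INF_{B,α}(g)`: the infimum of `‖g‖_{L^∞(E)}` over measurable `E ⊆ B` with `μ(E) ≥ α μ(B)`. -/
def INFa (μ : Measure X) (g : X → ℝ) (B : Set X) (α : ℝ) : ℝ≥0∞ :=
  ⨅ (E : Set X) (_ : MeasurableSet E) (_ : E ⊆ B)
    (_ : ENNReal.ofReal α * μ B ≤ μ E),
      essSup (fun x => ENNReal.ofReal |g x|) (μ.restrict E)

/-- `INF_B(g) = essinf_{y ∈ B} |g y|`. -/
def eINF (μ : Measure X) (g : X → ℝ) (B : Set X) : ℝ≥0∞ :=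
  essInf (fun x => ENNReal.ofReal |g x|) (μ.restrict B)

/-- A density point of a set `F` with respect to a ball-basis. -/
def IsDensityPoint (μ : Measure X) (𝓑 : BallBasis X μ) (F : Set X) (x : X) : Prop :=
  x ∈ F ∧ ∀ γ : ℝ, 0 < γ → γ < 1 →
    ∃ B ∈ 𝓑.balls, x ∈ B ∧ ENNReal.ofReal γ * μ B < μ (B ∩ F)

/-- A median of `f` over `B`. -/
def IsMedian (μ : Measure X) (f : X → ℝ) (B : Set X) (m : ℝ) : Prop :=
  μ {x ∈ B | m < f x} ≤ μ B / 2 ∧ μ {x ∈ B | f x < m} ≤ μ B / 2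

/-- A median of an `ℝ≥0∞`-valued function over `B`. -/
def IsMedianE (μ : Measure X) (F : X → ℝ≥0∞) (B : Set X) (m : ℝ≥0∞) : Prop :=
  μ {x ∈ B | m < F x} ≤ μ B / 2 ∧ μ {x ∈ B | F x < m} ≤ μ B / 2

/-- `⟨f⟩_B = (μ(B)⁻¹ ∫_B |f|^r)^{1/r}`. -/
def avgPow (μ : Measure X) (f : X → ℝ) (B : Set X) (r : ℝ) : ℝ≥0∞ :=
  ((μ B)⁻¹ * ∫⁻ x in B, (ENNReal.ofReal |f x|) ^ r ∂μ) ^ (1 / r)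

/-- `f_B = μ(B)⁻¹ ∫_B f`. -/
def intAvg (μ : Measure X) (f : X → ℝ) (B : Set X) : ℝ :=
  (∫ x in B, f x ∂μ) / (μ B).toReal

/-- `⟨f⟩_{#,B} = (μ(B)⁻¹ ∫_B |f − f_B|^r)^{1/r}`. -/
def sharpAvg (μ : Measure X) (f : X → ℝ) (B : Set X) (r : ℝ) : ℝ≥0∞ :=
  ((μ B)⁻¹ * ∫⁻ x in B, (ENNReal.ofReal |f x - intAvg μ f B|) ^ r ∂μ) ^ (1 / r)

/-- `⟨f⟩*_B = sup_{A ∈ 𝓑, A ⊇ B} ⟨f⟩_A`. -/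
def starAvg (μ : Measure X) (𝓑 : BallBasis X μ) (f : X → ℝ) (B : Set X) (r : ℝ) : ℝ≥0∞ :=
  ⨆ (A : Set X) (_ : A ∈ 𝓑.balls) (_ : B ⊆ A), avgPow μ f A r

/-- `⟨f⟩*_{#,B} = sup_{A ∈ 𝓑, A ⊇ B} ⟨f⟩_{#,A}`. -/
def starSharp (μ : Measure X) (𝓑 : BallBasis X μ) (f : X → ℝ) (B : Set X) (r : ℝ) : ℝ≥0∞ :=
  ⨆ (A : Set X) (_ : A ∈ 𝓑.balls) (_ : B ⊆ A), sharpAvg μ f A r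

/-- The maximal function `M f(x) = sup_{B ∋ x} ⟨f⟩_B`. -/
def Mmax (μ : Measure X) (𝓑 : BallBasis X μ) (f : X → ℝ) (r : ℝ) (x : X) : ℝ≥0∞ :=
  ⨆ (B : Set X) (_ : B ∈ 𝓑.balls) (_ : x ∈ B), avgPow μ f B r

/-- The sharp maximal function `M_# f(x) = sup_{B ∋ x} ⟨f⟩_{#,B}`. -/
def Msharp (μ : Measure X) (𝓑 : BallBasis X μ) (f : X → ℝ) (r : ℝ) (x : X) : ℝ≥0∞ :=
  ⨆ (B : Set X) (_ : B ∈ 𝓑.balls) (_ : x ∈ B), sharpAvg μ f B r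

/-- The local sharp maximal function of Jawerth–Torchinsky,
`M_{#,α} f(x) = sup_{B ∋ x} OSC_{B,α}(f)`. -/
def Mla (μ : Measure X) (𝓑 : BallBasis X μ) (f : X → ℝ) (α : ℝ) (x : X) : ℝ≥0∞ :=
  ⨆ (B : Set X) (_ : B ∈ 𝓑.balls) (_ : x ∈ B), OSCa μ f B α

/-- `|a − b|` in `ℝ≥0∞`. -/
def ediff (a b : ℝ≥0∞) : ℝ≥0∞ := (a - b) ⊔ (b - a)

/-- A subadditive operator. -/
def SubadditiveOp (T : (X → ℝ) → (X → ℝ)) : Prop :=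
  (∀ (c : ℝ) (f : X → ℝ) (x : X), |T (c • f) x| = |c| * |T f x|) ∧
  (∀ (f g : X → ℝ) (x : X), |T (f + g) x| ≤ |T f x| + |T g x|)

/-- The localization property of a bounded oscillation (BO) operator, with constant `L`:
`OSC_B (T (f · 1_{X ∖ B*})) ≤ L ⟨f⟩*_B` for all `f ∈ L^r` and balls `B`. -/
def HasBOconst (μ : Measure X) (𝓑 : BallBasis X μ) (r : ℝ)
    (T : (X → ℝ) → (X → ℝ)) (L : ℝ≥0∞) : Prop :=
  ∀ f : X → ℝ, MemLp f (ENNReal.ofReal r) μ → ∀ B ∈ 𝓑.balls,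
    osc (T ((𝓑.hull B)ᶜ.indicator f)) B ≤ L * starAvg μ 𝓑 f B r

/-- The weak-`L^r` inequality for `T`, with norm `N`. -/
def WeakType (μ : Measure X) (r : ℝ) (T : (X → ℝ) → (X → ℝ)) (N : ℝ≥0∞) : Prop :=
  ∀ f : X → ℝ, MemLp f (ENNReal.ofReal r) μ → ∀ lam : ℝ, 0 < lam →
    μ {x | lam < |T f x|} ≤ (N / ENNReal.ofReal lam) ^ r *
      ∫⁻ x, (ENNReal.ofReal |f x|) ^ r ∂μ
/-! Let `S = ⟨f⟩*_B`, `W = B*` and `g = |f|^r`. For `y ∈ B`, a ball `A ∋ y` either lies in `W`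
or satisfies `B ⊆ A*`; in the second case `⟨f⟩_A^r ≤ K ⟨f⟩_{A*}^r ≤ K S^r`. In the first case
`⟨f⟩_A^r ≤ 2K² S^r` unless `A` is one of the balls in `W` on which `g` has average above
`2K² S^r`. A Vitali-type selection of disjoint such balls, whose hulls cover all of them, bounds
the measure of their union by `K ∫_W g / (2K² S^r) ≤ μ(B) / 2`, so a non-null part of `B`
avoids them and there `M f ≤ (2K²)^{1/r} S`. -/

variable {μ : Measure X}

lemma Set.PairwiseDisjoint.countable_of_subset_of_measure_ne_top {u : Set (Set X)} {W : Set X}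
    (hd : u.PairwiseDisjoint id) (hmeas : ∀ b ∈ u, MeasurableSet b) (hpos : ∀ b ∈ u, μ b ≠ 0)
    (hsub : ∀ b ∈ u, b ⊆ W) (hW : μ W ≠ ∞) : u.Countable := by
  have h := Measure.countable_meas_pos_of_disjoint_of_meas_iUnion_ne_top μ
    (As := fun b : u => (b : Set X)) (fun b => hmeas b b.2)
    (fun b c hbc => hd b.2 c.2 (Subtype.coe_injective.ne hbc))
    (ne_top_of_le_ne_top hW (measure_mono (iUnion_subset fun b => hsub b b.2)))
  have hall : {b : u | 0 < μ b} = univ := eq_univ_of_forall fun b => pos_iff_ne_zero.2 (hpos b b.2)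
  rw [hall, countable_univ_iff] at h
  exact countable_coe_iff.mp h

lemma essInf_le_of_forall_le {ν : Measure X} {g : X → ℝ≥0∞} {G : Set X} {c : ℝ≥0∞}
    (hG : ν G ≠ 0) (h : ∀ y ∈ G, g y ≤ c) : essInf g ν ≤ c :=
  liminf_le_of_frequently_le' (frequently_ae_iff.2 fun h0 => hG (measure_mono_null h h0))

lemma avgPow_le_iff {f : X → ℝ} {A : Set X} {r : ℝ} {c : ℝ≥0∞} (hr : 0 < r) (h0 : μ A ≠ 0)
    (htop : μ A ≠ ∞) :
    avgPow μ f A r ≤ c ↔ ∫⁻ x in A, ENNReal.ofReal |f x| ^ r ∂μ ≤ c ^ r * μ A := by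
  rw [avgPow, one_div, ENNReal.rpow_inv_le_iff hr, ENNReal.inv_mul_le_iff h0 htop, mul_comm]

section Maximal

variable {𝓑 : BallBasis X μ} (f : X → ℝ) (r : ℝ)

lemma avgPow_le_starAvg {A B : Set X} (hA : A ∈ 𝓑.balls) (hBA : B ⊆ A) :
    avgPow μ f A r ≤ starAvg μ 𝓑 f B r :=
  le_iSup₂_of_le A hA (le_iSup_of_le hBA le_rfl)

lemma Mmax_le {y : X} {c : ℝ≥0∞} (h : ∀ A ∈ 𝓑.balls, y ∈ A → avgPow μ f A r ≤ c) :
    Mmax μ 𝓑 f r y ≤ c :=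
  iSup₂_le fun A hA => iSup_le (h A hA)

lemma starAvg_le_Mmax {B : Set X} {y : X} (hy : y ∈ B) :
    starAvg μ 𝓑 f B r ≤ Mmax μ 𝓑 f r y :=
  iSup₂_le fun A hA => iSup_le fun hBA => le_iSup₂_of_le A hA (le_iSup_of_le (hBA hy) le_rfl)

lemma starAvg_le_essInf_Mmax {B : Set X} (hB : MeasurableSet B) :
    starAvg μ 𝓑 f B r ≤ essInf (Mmax μ 𝓑 f r) (μ.restrict B) :=
  le_essInf_of_ae_le _ (ae_restrict_of_forall_mem hB fun _ hy => starAvg_le_Mmax f r hy)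

end Maximal

namespace BallBasis

variable (𝓑 : BallBasis X μ)

lemma subset_hull {B : Set X} (hB : B ∈ 𝓑.balls) : B ⊆ 𝓑.hull B :=
  𝓑.hull_sub B hB B hB (le_mul_of_one_le_left (zero_le) one_le_two)
    (by rw [inter_self]; exact nonempty_of_measure_ne_zero (𝓑.pos B hB).ne')

lemma one_le_K {B : Set X} (hB : B ∈ 𝓑.balls) : 1 ≤ 𝓑.K := by
  rw [← ENNReal.mul_le_mul_iff_right (𝓑.pos B hB).ne' (𝓑.lt_top B hB).ne, mul_one, mul_comm]
  exact (measure_mono (𝓑.subset_hull hB)).trans (𝓑.hull_bound B hB)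

lemma subset_hull_or_subset_hull {A B : Set X} (hA : A ∈ 𝓑.balls) (hB : B ∈ 𝓑.balls)
    (hAB : (A ∩ B).Nonempty) : A ⊆ 𝓑.hull B ∨ B ⊆ 𝓑.hull A := by
  rcases le_or_gt (μ A) (2 * μ B) with h | h
  · exact Or.inl (𝓑.hull_sub B hB A hA h hAB)
  · refine Or.inr (𝓑.hull_sub A hA B hB ?_ (inter_comm A B ▸ hAB))
    calc μ B ≤ 2 * μ B := le_mul_of_one_le_left (zero_le) one_le_two
      _ ≤ μ A := h.le
      _ ≤ 2 * μ A := le_mul_of_one_le_left (zero_le) one_le_two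

lemma setLIntegral_hull_le {r : ℝ} (hr : 0 < r) (f : X → ℝ) {A B : Set X} (hA : A ∈ 𝓑.balls)
    (hBA : B ⊆ 𝓑.hull A) :
    ∫⁻ x in 𝓑.hull A, ENNReal.ofReal |f x| ^ r ∂μ ≤ 𝓑.K * starAvg μ 𝓑 f B r ^ r * μ A := by
  have hA' := 𝓑.hull_mem A hA
  calc ∫⁻ x in 𝓑.hull A, ENNReal.ofReal |f x| ^ r ∂μ
      ≤ starAvg μ 𝓑 f B r ^ r * μ (𝓑.hull A) :=
        (avgPow_le_iff hr (𝓑.pos _ hA').ne' (𝓑.lt_top _ hA').ne).1 (avgPow_le_starAvg f r hA' hBA)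
    _ ≤ starAvg μ 𝓑 f B r ^ r * (𝓑.K * μ A) := by gcongr; exact 𝓑.hull_bound A hA
    _ = 𝓑.K * starAvg μ 𝓑 f B r ^ r * μ A := by ring

def heavyBalls (g : X → ℝ≥0∞) (W : Set X) (t : ℝ≥0∞) : Set (Set X) :=
  {A | A ∈ 𝓑.balls ∧ A ⊆ W ∧ t * μ A < ∫⁻ x in A, g x ∂μ}

theorem exists_disjoint_hull_cover {t : Set (Set X)} {W : Set X} (ht : t ⊆ 𝓑.balls)
    (htW : ∀ A ∈ t, A ⊆ W) (hW : μ W ≠ ∞) :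
    ∃ u ⊆ t, u.Countable ∧ u.PairwiseDisjoint id ∧ ⋃₀ t ⊆ ⋃ b ∈ u, 𝓑.hull b := by
  obtain ⟨u, hut, hdisj, hcov⟩ := Vitali.exists_disjoint_subfamily_covering_enlargement id t
    (fun A => (μ A).toReal) 2 one_lt_two (fun _ _ => toReal_nonneg) (μ W).toReal
    (fun A hA => toReal_mono hW (measure_mono (htW A hA)))
    (fun A hA => nonempty_of_measure_ne_zero (𝓑.pos A (ht hA)).ne')
  refine ⟨u, hut, hdisj.countable_of_subset_of_measure_ne_top (fun b hb => 𝓑.meas b (ht (hut hb)))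
    (fun b hb => (𝓑.pos b (ht (hut hb))).ne') (fun b hb => htW b (hut hb)) hW, hdisj, ?_⟩
  rintro y ⟨A, hA, hyA⟩
  obtain ⟨b, hb, hAb, hle⟩ := hcov A hA
  have hb' := ht (hut hb)
  have hAb2 : μ A ≤ 2 * μ b := by
    rw [← ENNReal.toReal_le_toReal (𝓑.lt_top A (ht hA)).ne
      (mul_ne_top ofNat_ne_top (𝓑.lt_top b hb').ne), toReal_mul]
    simpa using hle
  exact mem_biUnion hb (𝓑.hull_sub b hb' A (ht hA) hAb2 hAb hyA)

theorem mul_measure_sUnion_heavyBalls_le (g : X → ℝ≥0∞) {W : Set X} (hW : μ W ≠ ∞)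
    (t : ℝ≥0∞) : t * μ (⋃₀ 𝓑.heavyBalls g W t) ≤ 𝓑.K * ∫⁻ x in W, g x ∂μ := by
  obtain ⟨u, hu, hcount, hdisj, hcover⟩ :=
    𝓑.exists_disjoint_hull_cover (t := 𝓑.heavyBalls g W t) (fun A hA => hA.1)
      (fun A hA => hA.2.1) hW
  have hmeas : ∀ b ∈ u, MeasurableSet (id b) := fun b hb => 𝓑.meas b (hu hb).1
  calc t * μ (⋃₀ 𝓑.heavyBalls g W t) ≤ t * ∑' b : u, μ (𝓑.hull b) := by
        gcongr; exact (measure_mono hcover).trans (measure_biUnion_le μ hcount _)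
    _ ≤ t * ∑' b : u, 𝓑.K * μ b := by gcongr with b; exact 𝓑.hull_bound b (hu b.2).1
    _ = 𝓑.K * ∑' b : u, t * μ b := by rw [ENNReal.tsum_mul_left, ENNReal.tsum_mul_left]; ring
    _ ≤ 𝓑.K * ∑' b : u, ∫⁻ x in id b, g x ∂μ := by gcongr with b; exact (hu b.2).2.2.le
    _ = 𝓑.K * ∫⁻ x in ⋃ b ∈ u, id b, g x ∂μ := by rw [lintegral_biUnion hcount hmeas hdisj]
    _ ≤ 𝓑.K * ∫⁻ x in W, g x ∂μ := by
        gcongr; exact iUnion₂_subset fun b hb => (hu hb).2.1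

theorem measure_sUnion_heavyBalls_lt (g : X → ℝ≥0∞) {W B : Set X} {t : ℝ≥0∞} (hW : μ W ≠ ∞)
    (hB0 : μ B ≠ 0) (hBtop : μ B ≠ ∞) (ht : t ≠ ∞)
    (h : 2 * 𝓑.K * ∫⁻ x in W, g x ∂μ ≤ t * μ B) : μ (⋃₀ 𝓑.heavyBalls g W t) < μ B := by
  rcases eq_or_ne t 0 with rfl | ht0
  · have hI : ∫⁻ x in W, g x ∂μ = 0 := by simpa [𝓑.K_pos.ne'] using h
    have hempty : 𝓑.heavyBalls g W 0 = ∅ := eq_empty_of_forall_notMem fun A hA =>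
      (hA.2.2.trans_le ((lintegral_mono_set hA.2.1).trans_eq hI)).ne (by simp)
    simpa [hempty] using pos_iff_ne_zero.2 hB0
  · have h2 : μ (⋃₀ 𝓑.heavyBalls g W t) * 2 ≤ μ B := by
      rw [← ENNReal.mul_le_mul_iff_right ht0 ht]
      calc t * (μ (⋃₀ 𝓑.heavyBalls g W t) * 2)
          = 2 * (t * μ (⋃₀ 𝓑.heavyBalls g W t)) := by ring
        _ ≤ 2 * (𝓑.K * ∫⁻ x in W, g x ∂μ) := by
            gcongr 2 * ?_; exact 𝓑.mul_measure_sUnion_heavyBalls_le g hW t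
        _ ≤ t * μ B := by rw [← mul_assoc]; exact h
    calc μ (⋃₀ 𝓑.heavyBalls g W t) ≤ μ B / 2 :=
          (ENNReal.le_div_iff_mul_le (Or.inl two_ne_zero) (Or.inl ofNat_ne_top)).2 h2
      _ < μ B := ENNReal.half_lt_self hB0 hBtop

theorem Mmax_le_of_notMem_sUnion_heavyBalls {f : X → ℝ} {r : ℝ} (hr : 0 < r) {B : Set X}
    {y : X} {t c : ℝ≥0∞} (hB : B ∈ 𝓑.balls) (hyB : y ∈ B)
    (hy : y ∉ ⋃₀ 𝓑.heavyBalls (fun x => ENNReal.ofReal |f x| ^ r) (𝓑.hull B) t)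
    (hKt : 𝓑.K * starAvg μ 𝓑 f B r ^ r ≤ t) (htc : t ≤ c ^ r) : Mmax μ 𝓑 f r y ≤ c := by
  refine Mmax_le f r fun A hA hyA => (avgPow_le_iff hr (𝓑.pos A hA).ne' (𝓑.lt_top A hA).ne).2 ?_
  refine le_trans ?_ (mul_le_mul_left htc _)
  rcases 𝓑.subset_hull_or_subset_hull hA hB ⟨y, hyA, hyB⟩ with hAW | hBA
  · exact not_lt.1 fun hlt => hy ⟨A, ⟨hA, hAW, hlt⟩, hyA⟩
  · calc ∫⁻ x in A, ENNReal.ofReal |f x| ^ r ∂μ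
        ≤ ∫⁻ x in 𝓑.hull A, ENNReal.ofReal |f x| ^ r ∂μ := lintegral_mono_set (𝓑.subset_hull hA)
      _ ≤ 𝓑.K * starAvg μ 𝓑 f B r ^ r * μ A := 𝓑.setLIntegral_hull_le hr f hA hBA
      _ ≤ t * μ A := by gcongr

theorem essInf_Mmax_le {r : ℝ} (hr : 1 ≤ r) (f : X → ℝ) {B : Set X} (hB : B ∈ 𝓑.balls) :
    essInf (Mmax μ 𝓑 f r) (μ.restrict B) ≤ 2 * 𝓑.K * 𝓑.K * starAvg μ 𝓑 f B r := by
  have hr0 : 0 < r := zero_lt_one.trans_le hr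
  set S := starAvg μ 𝓑 f B r
  rcases eq_or_ne S ∞ with hS | hS
  · simp [hS, 𝓑.K_pos.ne']
  have hK : 𝓑.K ≤ 2 * 𝓑.K * 𝓑.K := by
    calc 𝓑.K = 1 * 𝓑.K := (one_mul _).symm
      _ ≤ 2 * 𝓑.K * 𝓑.K := by
          gcongr; exact (𝓑.one_le_K hB).trans (le_mul_of_one_le_left (zero_le) one_le_two)
  set E := ⋃₀ 𝓑.heavyBalls (fun x => ENNReal.ofReal |f x| ^ r) (𝓑.hull B) (2 * 𝓑.K * 𝓑.K * S ^ r)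
  have hE : μ E < μ B := by
    refine 𝓑.measure_sUnion_heavyBalls_lt _ (𝓑.lt_top _ (𝓑.hull_mem B hB)).ne (𝓑.pos B hB).ne'
      (𝓑.lt_top B hB).ne (by finiteness [𝓑.K_lt_top.ne]) ?_
    calc 2 * 𝓑.K * ∫⁻ x in 𝓑.hull B, ENNReal.ofReal |f x| ^ r ∂μ
        ≤ 2 * 𝓑.K * (𝓑.K * S ^ r * μ B) := by
          gcongr; exact 𝓑.setLIntegral_hull_le hr0 f hB (𝓑.subset_hull hB)
      _ = 2 * 𝓑.K * 𝓑.K * S ^ r * μ B := by ring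
  have hBE : μ.restrict B (B \ E) ≠ 0 := by
    rw [Measure.restrict_eq_self _ sdiff_subset]
    exact fun h0 => hE.not_ge (measure_mono_ae (ae_le_set.2 h0))
  refine essInf_le_of_forall_le hBE fun y hy =>
    𝓑.Mmax_le_of_notMem_sUnion_heavyBalls hr0 hB hy.1 hy.2 (by gcongr) ?_
  rw [ENNReal.mul_rpow_of_nonneg _ _ hr0.le]
  gcongr
  exact le_rpow_self_of_one_le ((𝓑.one_le_K hB).trans hK) hr

end BallBasis

/-- `⟨f⟩*_B ≤ essinf_B M f ≲ ⟨f⟩*_B`. -/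
theorem starAvg_comparable_essInf_Mmax
    {X : Type*} [MeasurableSpace X] (μ : Measure X) (𝓑 : BallBasis X μ)
    (r : ℝ) (hr : 1 ≤ r) :
    ∃ C : ℝ, 0 < C ∧
      ∀ f : X → ℝ, MemLp f (ENNReal.ofReal r) μ →
        ∀ B ∈ 𝓑.balls,
          starAvg μ 𝓑 f B r ≤ essInf (fun y => Mmax μ 𝓑 f r y) (μ.restrict B) ∧
          essInf (fun y => Mmax μ 𝓑 f r y) (μ.restrict B) ≤
            ENNReal.ofReal C * starAvg μ 𝓑 f B r := by
  have hC : 2 * 𝓑.K * 𝓑.K ≠ ∞ := by finiteness [𝓑.K_lt_top.ne]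
  refine ⟨(2 * 𝓑.K * 𝓑.K).toReal, toReal_pos (by simp [𝓑.K_pos.ne']) hC,
    fun f _ B hB => ⟨starAvg_le_essInf_Mmax f r (𝓑.meas B hB), ?_⟩⟩
  rw [ofReal_toReal hC]
  exact 𝓑.essInf_Mmax_le hr f hB
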